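/- arXiv:1411.7707 — 3 statements merged into one kernel-verified Lean document; each statement's English description precedes it below -/
import Mathlib

section
/- The open set D := {(S₁,S₂) ∈ ℝ≥0 × ℝ≥0 : 0 < S₁ + S₂ < M} is positively invariant for the system Ṡ₁ = −u f(S₁), Ṡ₂ = u f(S₁) − μ(S₂)(M − S₁ − S₂), for any measurable control u with values in [0,1]. -/
/-!
Each inequality defining `D` is kept by a barrier argument. If a quantity `x` satisfies
`x' ≥ K x` whenever `x` is near `0` on the wrong side, comparison with `c e^{r t}` for `r` on the
right side of `K` keeps `x` from crossing `0`. The linear bounds near `0` come from the local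
Lipschitz bounds of `f` and `μ` at their zero. `S₁ ≥ 0` then holds on its own, and
`M - S₁ - S₂` solves the linear equation `y' = μ(S₂) y`, so it never vanishes. Given these, the
inflow `u f(S₁)` is nonnegative, which gives `S₂ ≥ 0`, and then `S₁ + S₂ > 0`.
-/

open Set Real

theorem exp_barrier_le {x x' : ℝ → ℝ} {a b c r : ℝ} (hx : ContinuousOn x (Icc a b))
    (hx' : ∀ t ∈ Ico a b, HasDerivWithinAt x (x' t) (Ici t) t) (ha : c ≤ x a)
    (htouch : ∀ t ∈ Ico a b, x t = c * exp (r * (t - a)) → r * x t < x' t) :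
    ∀ t ∈ Icc a b, c * exp (r * (t - a)) ≤ x t := by
  have hw : ∀ t, HasDerivAt (fun s => c * exp (r * (s - a))) (r * (c * exp (r * (t - a)))) t :=
    fun t => ((((hasDerivAt_id' t).sub_const a).const_mul r).exp.const_mul c).congr_deriv (by ring)
  refine image_le_of_deriv_right_lt_deriv_boundary' (Continuous.continuousOn (by fun_prop))
    (fun t _ => (hw t).hasDerivWithinAt) (by simpa using ha) hx hx' fun t ht htx => ?_
  simpa only [htx] using htouch t ht htx.symm

theorem LocallyLipschitz.exists_abs_le_mul_abs {g : ℝ → ℝ} (hg : LocallyLipschitz g)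
    (hg0 : g 0 = 0) : ∃ K δ : ℝ, 0 ≤ K ∧ 0 < δ ∧ ∀ x, |x| ≤ δ → |g x| ≤ K * |x| := by
  obtain ⟨K, s, hs, hK⟩ := hg 0
  obtain ⟨δ, hδ, hδs⟩ := Metric.nhds_basis_closedBall.mem_iff.mp hs
  refine ⟨K, δ, K.2, hδ, fun x hx => ?_⟩
  have := hK.dist_le_mul x (hδs (by simpa using hx)) 0 (hδs (Metric.mem_closedBall_self hδ.le))
  simpa [hg0, Real.dist_eq] using this

theorem nonneg_of_le_deriv_near_zero {x x' : ℝ → ℝ} {a b K δ : ℝ} (hδ : 0 < δ)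
    (hx : ContinuousOn x (Icc a b)) (hx' : ∀ t ∈ Ico a b, HasDerivWithinAt x (x' t) (Ici t) t)
    (hK : ∀ t ∈ Ico a b, x t ∈ Icc (-δ) 0 → K * x t ≤ x' t) (ha : 0 ≤ x a) :
    ∀ t ∈ Icc a b, 0 ≤ x t := by
  set r := |K| + 1
  set E := exp (r * (b - a))
  have hE : 0 < E := exp_pos _
  -- `-ε exp (r (t - a))` is a strict lower barrier while it stays in `[-δ, 0)`; then `ε → 0`
  have hbarrier : ∀ ε ∈ Ioo 0 (δ / E), ∀ t ∈ Icc a b, -ε * exp (r * (t - a)) ≤ x t := by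
    intro ε hε
    refine exp_barrier_le hx hx' (by linarith [hε.1]) fun t ht htouch => ?_
    have het : exp (r * (t - a)) ≤ E :=
      exp_le_exp.mpr (mul_le_mul_of_nonneg_left (by linarith [ht.2]) (by positivity))
    have hεE : ε * E < δ := (lt_div_iff₀ hE).mp hε.2
    have hneg : x t < 0 := by rw [htouch]; nlinarith [exp_pos (r * (t - a)), hε.1]
    have := hK t ht ⟨by rw [htouch]; nlinarith [hε.1], hneg.le⟩
    nlinarith [le_abs_self K]
  intro t ht
  refine le_of_tendsto (f := fun ε => -ε * exp (r * (t - a))) (x := nhdsWithin 0 (Ioi 0)) ?_ ?_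
  · exact ((Continuous.tendsto' (by fun_prop) 0 0 (by simp)).mono_left nhdsWithin_le_nhds)
  · filter_upwards [Ioo_mem_nhdsGT (div_pos hδ hE)] with ε hε using hbarrier ε hε t ht

theorem pos_of_le_deriv_near_zero {x x' : ℝ → ℝ} {a b K δ : ℝ} (hδ : 0 < δ)
    (hx : ContinuousOn x (Icc a b)) (hx' : ∀ t ∈ Ico a b, HasDerivWithinAt x (x' t) (Ici t) t)
    (hK : ∀ t ∈ Ico a b, x t ∈ Ioc 0 δ → K * x t ≤ x' t) (ha : 0 < x a) :
    ∀ t ∈ Icc a b, 0 < x t := by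
  set r := -(|K| + 1)
  set c := min (x a) δ
  have hc : 0 < c := lt_min ha hδ
  have hbarrier := exp_barrier_le (c := c) (r := r) hx hx' (min_le_left _ _) fun t ht htouch => by
    have het : exp (r * (t - a)) ≤ 1 :=
      exp_le_one_iff.mpr
        (mul_nonpos_of_nonpos_of_nonneg (by linarith [abs_nonneg K]) (by linarith [ht.1]))
    have hpos : 0 < x t := htouch ▸ mul_pos hc (exp_pos _)
    have := hK t ht ⟨hpos, by rw [htouch]; nlinarith [min_le_right (x a) δ]⟩
    nlinarith [neg_abs_le K]
  exact fun t ht => (mul_pos hc (exp_pos _)).trans_le (hbarrier t ht)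

namespace PlanarSystem

variable {M a b : ℝ} {f μ u S₁ S₂ : ℝ → ℝ}

theorem fst_nonneg (hf_lip : LocallyLipschitz f) (hf0 : f 0 = 0) (hu : ∀ t, u t ∈ Icc (0:ℝ) 1)
    (hc₁ : ContinuousOn S₁ (Icc a b))
    (hd₁ : ∀ t ∈ Ico a b, HasDerivWithinAt S₁ (-(u t) * f (S₁ t)) (Ici t) t)
    (ha : 0 ≤ S₁ a) : ∀ t ∈ Icc a b, 0 ≤ S₁ t := by
  obtain ⟨K, δ, hK, hδ, hf⟩ := hf_lip.exists_abs_le_mul_abs hf0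
  refine nonneg_of_le_deriv_near_zero (K := K) hδ hc₁ hd₁ (fun t _ ht => ?_) ha
  have hfS := hf _ (abs_le.mpr ⟨ht.1, ht.2.trans hδ.le⟩)
  rw [abs_of_nonpos ht.2] at hfS
  have := abs_le.mp hfS
  nlinarith [(hu t).1, (hu t).2]

theorem fst_add_snd_lt (hμ : Continuous μ) (hc₁ : ContinuousOn S₁ (Icc a b))
    (hc₂ : ContinuousOn S₂ (Icc a b))
    (hd₁ : ∀ t ∈ Ico a b, HasDerivWithinAt S₁ (-(u t) * f (S₁ t)) (Ici t) t)
    (hd₂ : ∀ t ∈ Ico a b,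
      HasDerivWithinAt S₂ (u t * f (S₁ t) - μ (S₂ t) * (M - S₁ t - S₂ t)) (Ici t) t)
    (ha : S₁ a + S₂ a < M) : ∀ t ∈ Icc a b, S₁ t + S₂ t < M := by
  obtain ⟨K, hK⟩ := isCompact_Icc.bddBelow_image (hμ.comp_continuousOn hc₂)
  have hd : ∀ t ∈ Ico a b, HasDerivWithinAt (fun s => M - S₁ s - S₂ s)
      (μ (S₂ t) * (M - S₁ t - S₂ t)) (Ici t) t := fun t ht =>
    (((hasDerivWithinAt_const t _ M).sub (hd₁ t ht)).sub (hd₂ t ht)).congr_deriv (by ring)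
  have := pos_of_le_deriv_near_zero (x := fun s => M - S₁ s - S₂ s) one_pos
    ((continuousOn_const.sub hc₁).sub hc₂) hd
    (fun t ht hy => mul_le_mul_of_nonneg_right (hK ⟨t, Ico_subset_Icc_self ht, rfl⟩) hy.1.le)
    (by linarith)
  exact fun t ht => by linarith [show 0 < M - S₁ t - S₂ t from this t ht]

theorem snd_nonneg (hμ_lip : LocallyLipschitz μ) (hμ0 : μ 0 = 0)
    (hf_mono : MonotoneOn f (Ici 0)) (hf0 : f 0 = 0) (hu : ∀ t, u t ∈ Icc (0:ℝ) 1)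
    (hc₂ : ContinuousOn S₂ (Icc a b))
    (hd₂ : ∀ t ∈ Ico a b,
      HasDerivWithinAt S₂ (u t * f (S₁ t) - μ (S₂ t) * (M - S₁ t - S₂ t)) (Ici t) t)
    (h₁ : ∀ t ∈ Icc a b, 0 ≤ S₁ t) (hM : ∀ t ∈ Icc a b, S₁ t + S₂ t ≤ M)
    (ha : 0 ≤ S₂ a) : ∀ t ∈ Icc a b, 0 ≤ S₂ t := by
  obtain ⟨K, δ, hK, hδ, hμ⟩ := hμ_lip.exists_abs_le_mul_abs hμ0
  refine nonneg_of_le_deriv_near_zero (K := K * (M + δ)) hδ hc₂ hd₂ (fun t ht hS₂ => ?_) ha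
  have hS₁ := h₁ t (Ico_subset_Icc_self ht)
  have hNM := hM t (Ico_subset_Icc_self ht)
  have hinflow : 0 ≤ u t * f (S₁ t) := mul_nonneg (hu t).1 (hf0 ▸ hf_mono self_mem_Ici hS₁ hS₁)
  have hμS := hμ _ (abs_le.mpr ⟨hS₂.1, hS₂.2.trans hδ.le⟩)
  rw [abs_of_nonpos hS₂.2] at hμS
  have hout : μ (S₂ t) * (M - S₁ t - S₂ t) ≤ K * -S₂ t * (M + δ) := calc
    μ (S₂ t) * (M - S₁ t - S₂ t) ≤ K * -S₂ t * (M - S₁ t - S₂ t) :=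
      mul_le_mul_of_nonneg_right ((le_abs_self _).trans hμS) (by linarith)
    _ ≤ K * -S₂ t * (M + δ) :=
      mul_le_mul_of_nonneg_left (by linarith [hS₂.1]) (mul_nonneg hK (by linarith [hS₂.2]))
  linarith

theorem fst_add_snd_pos (hμ_lip : LocallyLipschitz μ) (hμ0 : μ 0 = 0)
    (hc₁ : ContinuousOn S₁ (Icc a b)) (hc₂ : ContinuousOn S₂ (Icc a b))
    (hd₁ : ∀ t ∈ Ico a b, HasDerivWithinAt S₁ (-(u t) * f (S₁ t)) (Ici t) t)
    (hd₂ : ∀ t ∈ Ico a b,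
      HasDerivWithinAt S₂ (u t * f (S₁ t) - μ (S₂ t) * (M - S₁ t - S₂ t)) (Ici t) t)
    (h₁ : ∀ t ∈ Icc a b, 0 ≤ S₁ t) (h₂ : ∀ t ∈ Icc a b, 0 ≤ S₂ t)
    (hM : ∀ t ∈ Icc a b, S₁ t + S₂ t ≤ M) (ha : 0 < S₁ a + S₂ a) :
    ∀ t ∈ Icc a b, 0 < S₁ t + S₂ t := by
  obtain ⟨K, δ, hK, hδ, hμ⟩ := hμ_lip.exists_abs_le_mul_abs hμ0
  have hd : ∀ t ∈ Ico a b, HasDerivWithinAt (fun s => S₁ s + S₂ s)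
      (-(μ (S₂ t) * (M - S₁ t - S₂ t))) (Ici t) t := fun t ht =>
    ((hd₁ t ht).add (hd₂ t ht)).congr_deriv (by ring)
  refine pos_of_le_deriv_near_zero (K := -(K * M)) hδ (hc₁.add hc₂) hd
    (fun t ht hN => ?_) ha
  have hS₁ := h₁ t (Ico_subset_Icc_self ht)
  have hS₂ := h₂ t (Ico_subset_Icc_self ht)
  have hNM := hM t (Ico_subset_Icc_self ht)
  have hμS := hμ (S₂ t) (abs_le.mpr ⟨by linarith, by linarith [hN.2]⟩)
  rw [abs_of_nonneg hS₂] at hμS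
  have : μ (S₂ t) * (M - S₁ t - S₂ t) ≤ K * M * (S₁ t + S₂ t) := calc
    μ (S₂ t) * (M - S₁ t - S₂ t) ≤ K * (S₁ t + S₂ t) * (M - S₁ t - S₂ t) :=
      mul_le_mul_of_nonneg_right
        ((le_abs_self _).trans (hμS.trans (mul_le_mul_of_nonneg_left (by linarith) hK)))
        (by linarith)
    _ ≤ K * M * (S₁ t + S₂ t) := by nlinarith [mul_nonneg hK hN.1.le]
  linarith

end PlanarSystem

theorem stmt2_general (M : ℝ) (f μ u S₁ S₂ : ℝ → ℝ)
    (hf_lip : LocallyLipschitz f) (hf_mono : MonotoneOn f (Ici 0)) (hf0 : f 0 = 0)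
    (hμ_lip : LocallyLipschitz μ) (hμ0 : μ 0 = 0)
    (hu : ∀ t, u t ∈ Icc (0:ℝ) 1)
    (hS₁ : ∀ t ∈ Ici (0:ℝ), HasDerivAt S₁ (-(u t) * f (S₁ t)) t)
    (hS₂ : ∀ t ∈ Ici (0:ℝ),
      HasDerivAt S₂ (u t * f (S₁ t) - μ (S₂ t) * (M - S₁ t - S₂ t)) t)
    (h0 : 0 ≤ S₁ 0 ∧ 0 ≤ S₂ 0 ∧ 0 < S₁ 0 + S₂ 0 ∧ S₁ 0 + S₂ 0 < M) :
    ∀ t ∈ Ici (0:ℝ),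
      0 ≤ S₁ t ∧ 0 ≤ S₂ t ∧ 0 < S₁ t + S₂ t ∧ S₁ t + S₂ t < M := by
  obtain ⟨h₁0, h₂0, hpos0, hlt0⟩ := h0
  intro T hT
  have hc₁ : ContinuousOn S₁ (Icc 0 T) := fun t ht =>
    (hS₁ t ht.1).continuousAt.continuousWithinAt
  have hc₂ : ContinuousOn S₂ (Icc 0 T) := fun t ht =>
    (hS₂ t ht.1).continuousAt.continuousWithinAt
  have hd₁ := fun t (ht : t ∈ Ico 0 T) => (hS₁ t ht.1).hasDerivWithinAt (s := Ici t)
  have hd₂ := fun t (ht : t ∈ Ico 0 T) => (hS₂ t ht.1).hasDerivWithinAt (s := Ici t)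
  have h₁ := PlanarSystem.fst_nonneg hf_lip hf0 hu hc₁ hd₁ h₁0
  have hlt := PlanarSystem.fst_add_snd_lt hμ_lip.continuous hc₁ hc₂ hd₁ hd₂ hlt0
  have hle : ∀ t ∈ Icc 0 T, S₁ t + S₂ t ≤ M := fun t ht => (hlt t ht).le
  have h₂ := PlanarSystem.snd_nonneg hμ_lip hμ0 hf_mono hf0 hu hc₂ hd₂ h₁ hle h₂0
  have hpos := PlanarSystem.fst_add_snd_pos hμ_lip hμ0 hc₁ hc₂ hd₁ hd₂ h₁ h₂ hle hpos0
  have hT' : T ∈ Icc 0 T := ⟨hT, le_rfl⟩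
  exact ⟨h₁ T hT', h₂ T hT', hpos T hT', hlt T hT'⟩

/-- D := {(S₁,S₂) : S₁,S₂ ≥ 0, 0 < S₁+S₂ < M} is positively invariant. -/
theorem stmt2 (M : ℝ) (hM : 0 < M) (f μ u S₁ S₂ : ℝ → ℝ)
    (hf_lip : LocallyLipschitz f) (hf_mono : MonotoneOn f (Ici 0)) (hf0 : f 0 = 0)
    (hμ_lip : LocallyLipschitz μ) (hμ_nonneg : ∀ x ∈ Ici (0:ℝ), 0 ≤ μ x) (hμ0 : μ 0 = 0)
    (hum : Measurable u) (hu : ∀ t, u t ∈ Icc (0:ℝ) 1)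
    (hS₁ : ∀ t ∈ Ici (0:ℝ), HasDerivAt S₁ (-(u t) * f (S₁ t)) t)
    (hS₂ : ∀ t ∈ Ici (0:ℝ),
      HasDerivAt S₂ (u t * f (S₁ t) - μ (S₂ t) * (M - S₁ t - S₂ t)) t)
    (h0 : 0 ≤ S₁ 0 ∧ 0 ≤ S₂ 0 ∧ 0 < S₁ 0 + S₂ 0 ∧ S₁ 0 + S₂ 0 < M) :
    ∀ t ∈ Ici (0:ℝ),
      0 ≤ S₁ t ∧ 0 ≤ S₂ t ∧ 0 < S₁ t + S₂ t ∧ S₁ t + S₂ t < M :=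
  stmt2_general M f μ u S₁ S₂ hf_lip hf_mono hf0 hμ_lip hμ0 hu hS₁ hS₂ h0
end

section
/- Under the constant control u = 0, starting from a point (S₁, S₂⁰) in D with S₂⁰ > S̲₂ > 0, the second coordinate S₂(t), which solves Ṡ₂ = −μ(S₂)(M − S₁ − S₂) with S₁ fixed, is strictly decreasing and reaches the value S̲₂ in finite time. -/
open Set Filter Topology

/-! The field `x ↦ -μ x * (M - S₁ - x)` is locally Lipschitz and vanishes at `0` and at `M - S₁`,
so by uniqueness of solutions `S₂` can reach neither equilibrium and stays in `(0, M - S₁)`, where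
the field is negative. While `S₂ ∈ [S̲₂, S₂⁰]` the field is at most
`-(min_{[S̲₂, S₂⁰]} μ) * (M - S₁ - S₂⁰) < 0`, so `S₂` falls at a uniform rate until it reaches `S̲₂`. -/

theorem LocallyLipschitz.mul' {α R : Type*} [PseudoMetricSpace α] [SeminormedRing R]
    {f g : α → R} (hf : LocallyLipschitz f) (hg : LocallyLipschitz g) :
    LocallyLipschitz fun x ↦ f x * g x := by
  intro x
  obtain ⟨Kf, U, hU, hfU⟩ := hf x
  obtain ⟨Kg, V, hV, hgV⟩ := hg x
  set Bf := ‖f x‖₊ + 1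
  set Bg := ‖g x‖₊ + 1
  have hbdd : ∀ᶠ y in 𝓝 x, ‖f y‖₊ ≤ Bf ∧ ‖g y‖₊ ≤ Bg :=
    ((hf.continuous.nnnorm.continuousAt).eventually (eventually_le_nhds (lt_add_one _))).and
      ((hg.continuous.nnnorm.continuousAt).eventually (eventually_le_nhds (lt_add_one _)))
  refine ⟨Bf * Kg + Bg * Kf, U ∩ V ∩ {y | ‖f y‖₊ ≤ Bf ∧ ‖g y‖₊ ≤ Bg},
    inter_mem (inter_mem hU hV) hbdd, LipschitzOnWith.of_dist_le_mul fun y hy z hz ↦ ?_⟩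
  have hfyz := hfU.dist_le_mul y hy.1.1 z hz.1.1
  have hgyz := hgV.dist_le_mul y hy.1.2 z hz.1.2
  have hfy : ‖f y‖ ≤ Bf := hy.2.1
  have hgz : ‖g z‖ ≤ Bg := hz.2.2
  calc dist (f y * g y) (f z * g z) = ‖f y * (g y - g z) + (f y - f z) * g z‖ := by
        rw [dist_eq_norm]; congr 1; noncomm_ring
    _ ≤ ‖f y‖ * dist (g y) (g z) + dist (f y) (f z) * ‖g z‖ := by
        simp only [dist_eq_norm]
        exact (norm_add_le _ _).trans (add_le_add (norm_mul_le _ _) (norm_mul_le _ _))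
    _ ≤ Bf * (Kg * dist y z) + Kf * dist y z * Bg := by gcongr
    _ = ↑(Bf * Kg + Bg * Kf) * dist y z := by push_cast; ring

theorem ODE_solution_eq_of_eq_equilibrium {E : Type*} [NormedAddCommGroup E] [NormedSpace ℝ E]
    {V : E → E} (hV : LocallyLipschitz V) {e : E} (he : V e = 0) {f : ℝ → E} {a b : ℝ}
    (hab : a ≤ b) (hf : ∀ t ∈ Icc a b, HasDerivAt f (V (f t)) t) (hfb : f b = e) : f a = e := by
  have hfc : ContinuousOn f (Icc a b) := fun t ht ↦ (hf t ht).continuousAt.continuousWithinAt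
  set s := insert e (f '' Icc a b)
  have hs : IsCompact s := (isCompact_Icc.image_of_continuousOn hfc).insert e
  obtain ⟨K, hK⟩ := (hV.locallyLipschitzOn (s := s)).exists_lipschitzOnWith_of_compact hs
  have heq := ODE_solution_unique_of_mem_Icc_left (v := fun _ ↦ V) (s := fun _ ↦ s) (g := fun _ ↦ e)
    (fun _ _ ↦ hK) hfc (fun t ht ↦ (hf t (Ioc_subset_Icc_self ht)).hasDerivWithinAt)
    (fun t ht ↦ mem_insert_of_mem _ (mem_image_of_mem f (Ioc_subset_Icc_self ht)))
    continuousOn_const (fun t _ ↦ he ▸ hasDerivWithinAt_const t _ e)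
    (fun _ _ ↦ mem_insert e _) hfb
  exact heq (left_mem_Icc.mpr hab)

theorem ODE_solution_mem_Ioo_of_equilibria {V f : ℝ → ℝ} (hV : LocallyLipschitz V) {a b t₀ : ℝ}
    (ha : V a = 0) (hb : V b = 0) (hf : ∀ t ∈ Ici t₀, HasDerivAt f (V (f t)) t)
    (hf₀ : f t₀ ∈ Ioo a b) : ∀ t ∈ Ici t₀, f t ∈ Ioo a b := by
  intro t ht
  have hft : ContinuousOn f (Icc t₀ t) := fun s hs ↦
    (hf s (Icc_subset_Ici_self hs)).continuousAt.continuousWithinAt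
  have hstart : ∀ e, V e = 0 → e ∈ f '' Icc t₀ t → f t₀ = e := by
    rintro e he ⟨s, hs, rfl⟩
    exact ODE_solution_eq_of_eq_equilibrium hV he hs.1
      (fun r hr ↦ hf r (Icc_subset_Ici_self (Icc_subset_Icc_right hs.2 hr))) rfl
  have hconn := (isPreconnected_Icc.image f hft).ordConnected
  by_contra hout
  rcases not_and_or.mp hout with hle | hge
  · have := hstart a ha (hconn.out (mem_image_of_mem f (right_mem_Icc.mpr ht))
      (mem_image_of_mem f (left_mem_Icc.mpr ht)) ⟨not_lt.mp hle, hf₀.1.le⟩)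
    exact hf₀.1.ne' this
  · have := hstart b hb (hconn.out (mem_image_of_mem f (left_mem_Icc.mpr ht))
      (mem_image_of_mem f (right_mem_Icc.mpr ht)) ⟨hf₀.2.le, not_lt.mp hge⟩)
    exact hf₀.2.ne this

theorem exists_eq_of_hasDerivAt_le_neg {f f' : ℝ → ℝ} {a ε t₀ : ℝ} (hε : 0 < ε)
    (hf : ∀ t ∈ Ici t₀, HasDerivAt f (f' t) t) (hf' : ∀ t ∈ Ici t₀, a < f t → f' t ≤ -ε)
    (ha : a ≤ f t₀) : ∃ T ∈ Ici t₀, f T = a := by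
  have hfc : ContinuousOn f (Ici t₀) := fun t ht ↦ (hf t ht).continuousAt.continuousWithinAt
  suffices ∃ T ∈ Ici t₀, f T ≤ a by
    obtain ⟨T, hT, hfT⟩ := this
    obtain ⟨c, hc, hfc_eq⟩ := intermediate_value_Icc' hT (hfc.mono Icc_subset_Ici_self) ⟨hfT, ha⟩
    exact ⟨c, hc.1, hfc_eq⟩
  by_contra! habove
  have hdecay : AntitoneOn (fun t ↦ f t + ε * t) (Ici t₀) := by
    refine antitoneOn_of_hasDerivWithinAt_nonpos (f' := fun t ↦ f' t + ε) (convex_Ici t₀)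
      (hfc.add (continuousOn_const.mul continuousOn_id)) (fun t ht ↦ ?_) (fun t ht ↦ ?_)
    · have := (hf t (interior_subset ht)).add ((hasDerivAt_id' t).const_mul ε)
      rw [mul_one] at this
      exact this.hasDerivWithinAt
    · have := hf' t (interior_subset ht) (habove t (interior_subset ht))
      linarith
  set T := t₀ + (f t₀ - a) / ε
  have hT : t₀ ≤ T := le_add_of_nonneg_right (div_nonneg (sub_nonneg.mpr ha) hε.le)
  have hdrop : ε * T = ε * t₀ + (f t₀ - a) := by simp only [T]; field_simp
  have hmono : f T + ε * T ≤ f t₀ + ε * t₀ := hdecay self_mem_Ici hT hT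
  linarith [habove T hT]

theorem stmt6_general (M S₁ S₂0 uS₂ : ℝ) (μ S₂ : ℝ → ℝ)
    (hsumM : S₁ + S₂0 < M)
    (hμ_lip : LocallyLipschitz μ) (hμ_pos : ∀ x > (0:ℝ), 0 < μ x) (hμ0 : μ 0 = 0)
    (huS₂ : 0 < uS₂) (huS₂' : uS₂ < S₂0)
    (hinit : S₂ 0 = S₂0)
    (hode : ∀ t ∈ Ici (0:ℝ), HasDerivAt S₂ (-μ (S₂ t) * (M - S₁ - S₂ t)) t) :
    StrictAntiOn S₂ (Ici 0) ∧ ∃ T : ℝ, 0 ≤ T ∧ S₂ T = uS₂ := by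
  have hV : LocallyLipschitz fun x ↦ -μ x * (M - S₁ - x) :=
    (locallyLipschitz_neg_iff.mpr hμ_lip).mul' ((LocallyLipschitz.const _).sub LocallyLipschitz.id)
  have hrange : ∀ t ∈ Ici 0, S₂ t ∈ Ioo 0 (M - S₁) :=
    ODE_solution_mem_Ioo_of_equilibria hV (by simp [hμ0]) (by simp) hode
      (hinit ▸ ⟨huS₂.trans huS₂', by linarith⟩)
  have hanti : StrictAntiOn S₂ (Ici 0) := by
    refine strictAntiOn_of_hasDerivWithinAt_neg (convex_Ici 0)
      (fun t ht ↦ (hode t ht).continuousAt.continuousWithinAt)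
      (fun t ht ↦ (hode t (interior_subset ht)).hasDerivWithinAt) fun t ht ↦ ?_
    obtain ⟨hpos, hlt⟩ := hrange t (interior_subset ht)
    rw [neg_mul, neg_lt_zero]
    exact mul_pos (hμ_pos _ hpos) (by linarith)
  obtain ⟨x₀, hx₀, hmin⟩ := isCompact_Icc.exists_isMinOn (nonempty_Icc.mpr huS₂'.le)
    hμ_lip.continuous.continuousOn
  refine ⟨hanti, exists_eq_of_hasDerivAt_le_neg
    (mul_pos (hμ_pos _ (huS₂.trans_le hx₀.1)) (by linarith : 0 < M - S₁ - S₂0)) hode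
    (fun t ht hlt ↦ ?_) (hinit ▸ huS₂'.le)⟩
  have hle : S₂ t ≤ S₂0 := hinit ▸ hanti.antitoneOn self_mem_Ici ht ht
  have : μ x₀ * (M - S₁ - S₂0) ≤ μ (S₂ t) * (M - S₁ - S₂ t) :=
    mul_le_mul (hmin ⟨hlt.le, hle⟩) (by linarith) (by linarith) (hμ_pos _ (hrange t ht).1).le
  linarith

/-- Under u = 0 with S₁ fixed, S₂ is strictly decreasing and reaches S̲₂ in finite time. -/
theorem stmt6 (M S₁ S₂0 uS₂ : ℝ) (μ S₂ : ℝ → ℝ)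
    (hM : 0 < M) (hS₁ : 0 ≤ S₁) (hsum : 0 < S₁ + S₂0) (hsumM : S₁ + S₂0 < M)
    (hμ_lip : LocallyLipschitz μ) (hμ_pos : ∀ x > (0:ℝ), 0 < μ x) (hμ0 : μ 0 = 0)
    (huS₂ : 0 < uS₂) (huS₂' : uS₂ < S₂0)
    (hinit : S₂ 0 = S₂0)
    (hode : ∀ t ∈ Ici (0:ℝ), HasDerivAt S₂ (-μ (S₂ t) * (M - S₁ - S₂ t)) t) :
    StrictAntiOn S₂ (Ici 0) ∧ ∃ T : ℝ, 0 ≤ T ∧ S₂ T = uS₂ :=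
  stmt6_general M S₁ S₂0 uS₂ μ S₂ hsumM hμ_lip hμ_pos hμ0 huS₂ huS₂' hinit hode
end

section
/- Along an extremal, whenever the switching function φ := λ₂ − λ₁ vanishes at a time t, its derivative satisfies φ̇(t) = λ₂(t) μ′(S₂(t))(M − S₁(t) − S₂(t)); in particular, if λ₂(t) > 0 and 0 < S₁(t)+S₂(t) < M, then φ̇(t) > 0 when S₂(t) < S₂* and φ̇(t) < 0 when S₂(t) > S₂*. -/
theorem hasDerivAt_switchingFunction {M t : ℝ} {f' μ μ' u S₁ S₂ lam₁ lam₂ : ℝ → ℝ}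
    (hlam₁ : HasDerivAt lam₁
      (-(u t) * (lam₂ t - lam₁ t) * f' (S₁ t) - lam₂ t * μ (S₂ t)) t)
    (hlam₂ : HasDerivAt lam₂
      (lam₂ t * (μ' (S₂ t) * (M - S₁ t - S₂ t) - μ (S₂ t))) t) :
    HasDerivAt (fun s => lam₂ s - lam₁ s)
      (lam₂ t * μ' (S₂ t) * (M - S₁ t - S₂ t) + u t * f' (S₁ t) * (lam₂ t - lam₁ t)) t :=
  (hlam₂.sub hlam₁).congr_deriv (by ring)

/-- When the switching function φ = λ₂ − λ₁ vanishes at time t, its derivative equals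
λ₂ μ′(S₂)(M − S₁ − S₂); in particular if λ₂(t) > 0 and 0 < S₁+S₂ < M then φ̇(t) > 0
when S₂(t) < S₂* and φ̇(t) < 0 when S₂(t) > S₂*. -/
theorem stmt15 (M S₂s t : ℝ) (f' μ μ' u S₁ S₂ lam₁ lam₂ : ℝ → ℝ)
    (hμ'pos : ∀ s, 0 ≤ s → s < S₂s → 0 < μ' s)
    (hμ'neg : ∀ s, S₂s < s → μ' s < 0)
    (hlam₁ : HasDerivAt lam₁
      (-(u t) * (lam₂ t - lam₁ t) * f' (S₁ t) - lam₂ t * μ (S₂ t)) t)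
    (hlam₂ : HasDerivAt lam₂
      (lam₂ t * (μ' (S₂ t) * (M - S₁ t - S₂ t) - μ (S₂ t))) t)
    (hφ0 : lam₂ t - lam₁ t = 0)
    (hS₂nn : 0 ≤ S₂ t) :
    HasDerivAt (fun s => lam₂ s - lam₁ s)
      (lam₂ t * μ' (S₂ t) * (M - S₁ t - S₂ t)) t ∧
    (0 < lam₂ t → 0 < S₁ t + S₂ t → S₁ t + S₂ t < M →
      ((S₂ t < S₂s → 0 < lam₂ t * μ' (S₂ t) * (M - S₁ t - S₂ t)) ∧
       (S₂s < S₂ t → lam₂ t * μ' (S₂ t) * (M - S₁ t - S₂ t) < 0))) := by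
  refine ⟨?_, fun hlam hsum_pos hsum_lt => ⟨fun hlt => ?_, fun hgt => ?_⟩⟩
  · simpa [hφ0] using hasDerivAt_switchingFunction hlam₁ hlam₂
  all_goals have hgap : 0 < M - S₁ t - S₂ t := by linarith
  · exact mul_pos (mul_pos hlam (hμ'pos (S₂ t) hS₂nn hlt)) hgap
  · exact mul_neg_of_neg_of_pos (mul_neg_of_pos_of_neg hlam (hμ'neg (S₂ t) hgt)) hgap
end
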